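/- Let X and Y be n×n complex matrices, let (C_j)_{j≥2} be a sequence of n×n complex matrices, and let r_z > 0 be such that Σ_{j≥2} r^j ‖C_j‖ < ∞ for every 0 < r < r_z. For n ≥ 2 let Ψₙ(λ) = e^{λX/2} e^{λY/2} e^{λ²C₂} e^{λ³C₃} ⋯ e^{λⁿCₙ} · e^{λⁿCₙ} ⋯ e^{λ³C₃} e^{λ²C₂} e^{λY/2} e^{λX/2}, and assume that for every n ≥ 2 and every k ≤ n the k-th derivative of Ψₙ at λ = 0 equals (X+Y)^k. Then for every real λ with |λ| < r_z, lim_{n→∞} Ψₙ(λ) = exp(λ(X+Y)). -/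

import Mathlib

attribute [local instance] Matrix.linftyOpNormedAddCommGroup Matrix.linftyOpNormedRing
  Matrix.linftyOpNormedAlgebra Matrix.linftyOpNormedSpace

/-- The truncated symmetric (palindromic) Zassenhaus product
`Ψₙ(λ) = e^{λX/2} e^{λY/2} e^{λ²C₂} ⋯ e^{λⁿCₙ} · e^{λⁿCₙ} ⋯ e^{λ²C₂} e^{λY/2} e^{λX/2}`. -/
noncomputable def symmZassenhausProd {m : ℕ} (X Y : Matrix (Fin m) (Fin m) ℂ)
    (C : ℕ → Matrix (Fin m) (Fin m) ℂ) (n : ℕ) (l : ℝ) : Matrix (Fin m) (Fin m) ℂ :=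
  NormedSpace.exp ((l / 2) • X) * NormedSpace.exp ((l / 2) • Y) *
    ((List.range' 2 (n - 1)).map fun j => NormedSpace.exp (l ^ j • C j)).prod *
    (((List.range' 2 (n - 1)).map fun j => NormedSpace.exp (l ^ j • C j)).reverse).prod *
    NormedSpace.exp ((l / 2) • Y) * NormedSpace.exp ((l / 2) • X)

/-!
Replacing the real variable by a complex one turns each `Ψₙ` and `z ↦ exp (z • (X + Y))` into
entire functions whose Taylor coefficients at `0` agree up to order `n`. On a circle of radius
`r ∈ (|λ|, r_z)` the `Ψₙ` are bounded uniformly in `n`, by `exp (r‖X‖ + r‖Y‖ + 2 ∑ rʲ‖Cⱼ‖)`, so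
Cauchy's estimates bound the difference at `λ` by a geometric tail `O((|λ|/r)ⁿ⁺¹)`.
-/

open NormedSpace Filter Topology Metric

namespace Complex

variable {E : Type*} [NormedAddCommGroup E] [NormedSpace ℂ E] [CompleteSpace E]

theorem iteratedDeriv_comp_ofReal {f : ℂ → E} (hf : Differentiable ℂ f) (k : ℕ) :
    iteratedDeriv k (fun t : ℝ => f t) = fun t : ℝ => iteratedDeriv k f (t : ℂ) := by
  induction k with
  | zero => simp
  | succ k ih =>
    ext t
    rw [iteratedDeriv_succ, ih, iteratedDeriv_succ]
    have hd := ((hf.contDiff (n := ⊤)).differentiable_iteratedDeriv k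
      (WithTop.coe_lt_top _) t).hasDerivAt
    simpa [Function.comp_def] using ((hd.hasFDerivAt.restrictScalars ℝ).comp_hasDerivAt t
      ofRealCLM.hasDerivAt).deriv

theorem norm_le_of_iteratedDeriv_eq_zero {h : ℂ → E} (hh : Differentiable ℂ h) {n : ℕ}
    (h0 : ∀ k ≤ n, iteratedDeriv k h 0 = 0) {r M : ℝ} (hr : 0 < r)
    (hM : ∀ z ∈ sphere 0 r, ‖h z‖ ≤ M) {z : ℂ} (hz : ‖z‖ < r) :
    ‖h z‖ ≤ M * (‖z‖ / r) ^ (n + 1) * (1 - ‖z‖ / r)⁻¹ := by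
  set q := ‖z‖ / r
  have hq : q < 1 := (div_lt_one hr).mpr hz
  have htaylor := (hasSum_nat_add_iff' (n + 1)).mpr
    (by simpa using hasSum_taylorSeries_of_entire hh 0 z)
  rw [Finset.sum_eq_zero fun k hk => by rw [h0 k (Finset.mem_range_succ_iff.mp hk), smul_zero,
    smul_zero], sub_zero] at htaylor
  have hgeom : HasSum (fun k => M * q ^ (n + 1) * q ^ k) (M * q ^ (n + 1) * (1 - q)⁻¹) :=
    (hasSum_geometric_of_lt_one (by positivity) hq).mul_left _
  refine htaylor.norm_le_of_bounded hgeom fun k => ?_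
  have hcauchy := norm_iteratedDeriv_le_of_forall_mem_sphere_norm_le (k + (n + 1)) hr
    hh.diffContOnCl hM
  rw [norm_smul, norm_smul, norm_inv, norm_pow, norm_natCast]
  calc ((k + (n + 1)).factorial : ℝ)⁻¹ * (‖z‖ ^ (k + (n + 1)) *
        ‖iteratedDeriv (k + (n + 1)) h 0‖)
      ≤ ((k + (n + 1)).factorial : ℝ)⁻¹ * (‖z‖ ^ (k + (n + 1)) *
        ((k + (n + 1)).factorial * M / r ^ (k + (n + 1)))) := by gcongr
    _ = M * q ^ (n + 1) * q ^ k := by simp only [q, div_pow]; field_simp; ring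

theorem tendsto_of_iteratedDeriv_eq {F : ℕ → ℂ → E} {g : ℂ → E}
    (hF : ∀ n, Differentiable ℂ (F n)) (hg : Differentiable ℂ g) {r M : ℝ} (hr : 0 < r)
    (hM : ∀ n, ∀ z ∈ sphere 0 r, ‖F n z‖ ≤ M)
    (hFg : ∀ᶠ n in atTop, ∀ k ≤ n, iteratedDeriv k (F n) 0 = iteratedDeriv k g 0)
    {z : ℂ} (hz : ‖z‖ < r) : Tendsto (fun n => F n z) atTop (𝓝 (g z)) := by
  obtain ⟨Mg, hMg⟩ := (isCompact_sphere (0 : ℂ) r).exists_bound_of_continuousOn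
    hg.continuous.continuousOn
  set q := ‖z‖ / r
  have hq : q < 1 := (div_lt_one hr).mpr hz
  have hbound : ∀ᶠ n in atTop, ‖F n z - g z‖ ≤ (M + Mg) * q ^ (n + 1) * (1 - q)⁻¹ := by
    filter_upwards [hFg] with n hn
    refine norm_le_of_iteratedDeriv_eq_zero ((hF n).sub hg) (fun k hk => ?_) hr
      (fun w hw => (norm_sub_le _ _).trans (add_le_add (hM n w hw) (hMg w hw))) hz
    rw [iteratedDeriv_sub ((hF n).contDiff.contDiffAt) hg.contDiff.contDiffAt, hn k hk, sub_self]
  have hlim : Tendsto (fun n : ℕ => (M + Mg) * q ^ (n + 1) * (1 - q)⁻¹) atTop (𝓝 0) := by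
    simpa using ((tendsto_pow_atTop_nhds_zero_of_lt_one (by positivity) hq).comp
      (tendsto_add_atTop_nat 1)).const_mul (M + Mg) |>.mul_const (1 - q)⁻¹
  exact tendsto_iff_norm_sub_tendsto_zero.mpr
    (squeeze_zero' (Eventually.of_forall fun n => norm_nonneg _) hbound hlim)

end Complex

theorem iteratedDeriv_exp_smul_const {𝕂 𝔸 : Type*} [RCLike 𝕂] [NormedRing 𝔸] [NormedAlgebra 𝕂 𝔸]
    [CompleteSpace 𝔸] (A : 𝔸) (k : ℕ) :
    iteratedDeriv k (fun t : 𝕂 => exp (t • A)) = fun t => A ^ k * exp (t • A) := by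
  induction k with
  | zero => simp
  | succ k ih =>
    ext t
    rw [iteratedDeriv_succ, ih, ((hasDerivAt_exp_smul_const' A t).const_mul (A ^ k)).deriv,
      pow_succ, mul_assoc]

section

variable {𝔸 : Type*} [NormedRing 𝔸] [NormedAlgebra ℂ 𝔸] [CompleteSpace 𝔸] [NormOneClass 𝔸]

theorem norm_exp_le_exp_norm (x : 𝔸) : ‖exp x‖ ≤ Real.exp ‖x‖ := by
  refine (exp_series_hasSum_exp' (𝕂 := ℂ) x).norm_le_of_bounded
    (Real.exp_eq_exp_ℝ ▸ exp_series_hasSum_exp' (𝕂 := ℝ) ‖x‖) fun n => ?_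
  rw [norm_smul, norm_inv, RCLike.norm_natCast, smul_eq_mul]
  gcongr
  exact norm_pow_le x n

theorem norm_list_prod_map_exp_le {ι : Type*} (L : List ι) (f : ι → 𝔸) :
    ‖(L.map fun i => exp (f i)).prod‖ ≤ Real.exp (L.map fun i => ‖f i‖).sum := by
  induction L with
  | nil => simp
  | cons i L ih =>
    simp only [List.map_cons, List.prod_cons, List.sum_cons, Real.exp_add]
    exact norm_mul_le_of_le (norm_exp_le_exp_norm _) ih

end

theorem List.sum_map_range'_le_tsum {g : ℕ → ℝ} (hg : ∀ j, 0 ≤ g j) {s : ℕ}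
    (hs : Summable fun j => g (j + s)) (k : ℕ) :
    ((List.range' s k).map g).sum ≤ ∑' j, g (j + s) := by
  have hsum : ((List.range' s k).map g).sum = ∑ j ∈ Finset.range k, g (j + s) := by
    simp [List.range'_eq_map_range, Finset.sum_eq_multiset_sum, Multiset.range,
      Function.comp_def, add_comm]
  exact hsum ▸ hs.sum_le_tsum _ fun j _ => hg _

theorem Differentiable.list_prod_map {𝕜 E 𝔸 ι : Type*} [NontriviallyNormedField 𝕜]
    [NormedAddCommGroup E] [NormedSpace 𝕜 E] [NormedRing 𝔸] [NormedAlgebra 𝕜 𝔸] (L : List ι)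
    {f : ι → E → 𝔸} (hf : ∀ i ∈ L, Differentiable 𝕜 (f i)) :
    Differentiable 𝕜 fun x => (L.map fun i => f i x).prod := fun x =>
  (HasFDerivAt.list_prod' fun i hi => (hf i hi x).hasFDerivAt).differentiableAt

variable {𝔸 : Type*} [NormedRing 𝔸] [NormedAlgebra ℂ 𝔸]

noncomputable def complexSymmZassenhausProd (X Y : 𝔸) (C : ℕ → 𝔸) (n : ℕ) (z : ℂ) : 𝔸 :=
  exp ((z / 2) • X) * exp ((z / 2) • Y) *
    ((List.range' 2 (n - 1)).map fun j => exp (z ^ j • C j)).prod *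
    (((List.range' 2 (n - 1)).map fun j => exp (z ^ j • C j)).reverse).prod *
    exp ((z / 2) • Y) * exp ((z / 2) • X)

variable [CompleteSpace 𝔸]

theorem differentiable_complexSymmZassenhausProd (X Y : 𝔸) (C : ℕ → 𝔸) (n : ℕ) :
    Differentiable ℂ (complexSymmZassenhausProd X Y C n) := by
  have hhalf (A : 𝔸) : Differentiable ℂ fun z : ℂ => exp ((z / 2) • A) :=
    (differentiable_exp_smul_const ℂ A).comp (differentiable_id.div_const 2)
  have hmid (L : List ℕ) : Differentiable ℂ fun z : ℂ => (L.map fun j => exp (z ^ j • C j)).prod :=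
    Differentiable.list_prod_map L fun j _ =>
      (differentiable_exp_smul_const ℂ (C j)).comp (differentiable_pow j)
  unfold complexSymmZassenhausProd
  simp only [← List.map_reverse]
  exact (((((hhalf X).mul (hhalf Y)).mul (hmid _)).mul (hmid _)).mul (hhalf Y)).mul (hhalf X)

theorem norm_complexSymmZassenhausProd_le [NormOneClass 𝔸] (X Y : 𝔸) (C : ℕ → 𝔸) (n : ℕ) {r : ℝ}
    (hr : 0 ≤ r) (hC : Summable fun j => r ^ (j + 2) * ‖C (j + 2)‖) {z : ℂ} (hz : ‖z‖ = r) :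
    ‖complexSymmZassenhausProd X Y C n z‖ ≤
      Real.exp (r * ‖X‖ + r * ‖Y‖ + 2 * ∑' j, r ^ (j + 2) * ‖C (j + 2)‖) := by
  set S := ∑' j, r ^ (j + 2) * ‖C (j + 2)‖
  have hhalf (A : 𝔸) : ‖exp ((z / 2) • A)‖ ≤ Real.exp (r / 2 * ‖A‖) := by
    refine (norm_exp_le_exp_norm _).trans_eq ?_
    rw [norm_smul, norm_div, hz, RCLike.norm_ofNat]
  have hmid (L : List ℕ) (hL : (L.map fun j => r ^ j * ‖C j‖).sum ≤ S) :
      ‖(L.map fun j => exp (z ^ j • C j)).prod‖ ≤ Real.exp S := by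
    refine (norm_list_prod_map_exp_le _ _).trans (Real.exp_le_exp.mpr ?_)
    simpa [norm_smul, hz] using hL
  have hrange : ((List.range' 2 (n - 1)).map fun j => r ^ j * ‖C j‖).sum ≤ S :=
    List.sum_map_range'_le_tsum (g := fun j => r ^ j * ‖C j‖) (fun j => by positivity) hC _
  have hrange_rev : ((List.range' 2 (n - 1)).reverse.map fun j => r ^ j * ‖C j‖).sum ≤ S := by
    rwa [List.map_reverse, List.sum_reverse]
  unfold complexSymmZassenhausProd
  rw [← List.map_reverse]
  calc _ ≤ Real.exp (r / 2 * ‖X‖) * Real.exp (r / 2 * ‖Y‖) * Real.exp S * Real.exp S *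
        Real.exp (r / 2 * ‖Y‖) * Real.exp (r / 2 * ‖X‖) :=
        norm_mul_le_of_le (norm_mul_le_of_le (norm_mul_le_of_le (norm_mul_le_of_le
          (norm_mul_le_of_le (hhalf X) (hhalf Y)) (hmid _ hrange)) (hmid _ hrange_rev)) (hhalf Y))
          (hhalf X)
    _ = _ := by simp only [← Real.exp_add]; ring_nf

theorem symmZassenhausProd_eq_complexSymmZassenhausProd {m : ℕ} (X Y : Matrix (Fin m) (Fin m) ℂ)
    (C : ℕ → Matrix (Fin m) (Fin m) ℂ) (n : ℕ) (l : ℝ) :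
    symmZassenhausProd X Y C n l = complexSymmZassenhausProd X Y C n l := by
  simp only [symmZassenhausProd, complexSymmZassenhausProd, ← Complex.coe_smul,
    Complex.ofReal_div, Complex.ofReal_ofNat, Complex.ofReal_pow]
  -- the sides differ only in the topology instance on matrices: product topology vs. norm
  rfl

theorem symmZassenhausProd_tendsto_exp_general (m : ℕ) (X Y : Matrix (Fin m) (Fin m) ℂ)
    (C : ℕ → Matrix (Fin m) (Fin m) ℂ) (r_z : ℝ)
    (hsum : ∀ r : ℝ, 0 < r → r < r_z → Summable fun j : ℕ => r ^ (j + 2) * ‖C (j + 2)‖)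
    (hderiv : ∀ n : ℕ, 2 ≤ n → ∀ k : ℕ, k ≤ n →
      iteratedDeriv k (fun l : ℝ => symmZassenhausProd X Y C n l) 0 = (X + Y) ^ k) :
    ∀ l : ℝ, |l| < r_z →
      Filter.Tendsto (fun n : ℕ => symmZassenhausProd X Y C n l) Filter.atTop
        (nhds (NormedSpace.exp (l • (X + Y)))) := by
  intro l hl
  -- `‖1‖ = 1` fails for `m = 0`, where there is only one matrix
  rcases isEmpty_or_nonempty (Fin m) with hm | hm
  · exact tendsto_const_nhds.congr fun n => Subsingleton.elim _ _
  have : NormOneClass (Matrix (Fin m) (Fin m) ℂ) := Matrix.linfty_opNormOneClass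
  obtain ⟨r, hlr, hrz⟩ := exists_between hl
  have hr : 0 < r := (abs_nonneg l).trans_lt hlr
  simp_rw [symmZassenhausProd_eq_complexSymmZassenhausProd, ← Complex.coe_smul]
  refine Complex.tendsto_of_iteratedDeriv_eq (differentiable_complexSymmZassenhausProd X Y C)
    (differentiable_exp_smul_const ℂ (X + Y)) hr
    (fun n z hz => norm_complexSymmZassenhausProd_le X Y C n hr.le (hsum r hr hrz)
      (mem_sphere_zero_iff_norm.mp hz)) ?_ (by simpa using hlr)
  filter_upwards [eventually_ge_atTop 2] with n hn k hk
  have hΨ := hderiv n hn k hk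
  simp_rw [symmZassenhausProd_eq_complexSymmZassenhausProd,
    Complex.iteratedDeriv_comp_ofReal (differentiable_complexSymmZassenhausProd X Y C n)] at hΨ
  simpa only [iteratedDeriv_exp_smul_const, zero_smul, exp_zero, mul_one, Complex.ofReal_zero]
    using hΨ

/-- If `Σ_{j≥2} r^j ‖C_j‖ < ∞` for all `0 < r < r_z` and all derivatives of `Ψₙ` at `0` up to
order `n` equal `(X+Y)^k`, then `Ψₙ(λ) → exp (λ(X+Y))` as `n → ∞`, for every `|λ| < r_z`. -/
theorem symmZassenhausProd_tendsto_exp (m : ℕ) (X Y : Matrix (Fin m) (Fin m) ℂ)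
    (C : ℕ → Matrix (Fin m) (Fin m) ℂ) (r_z : ℝ) (hr : 0 < r_z)
    (hsum : ∀ r : ℝ, 0 < r → r < r_z → Summable fun j : ℕ => r ^ (j + 2) * ‖C (j + 2)‖)
    (hderiv : ∀ n : ℕ, 2 ≤ n → ∀ k : ℕ, k ≤ n →
      iteratedDeriv k (fun l : ℝ => symmZassenhausProd X Y C n l) 0 = (X + Y) ^ k) :
    ∀ l : ℝ, |l| < r_z →
      Filter.Tendsto (fun n : ℕ => symmZassenhausProd X Y C n l) Filter.atTop
        (nhds (NormedSpace.exp (l • (X + Y)))) :=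
  symmZassenhausProd_tendsto_exp_general m X Y C r_z hsum hderiv
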